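/- Let L_1, …, L_k be positive integers. Then every nonnegative integer less than or equal to L_1⋯L_k can be written as the sum of at most 2^{k−1} numbers of the form l_1⋯l_k with 1 ≤ l_i ≤ L_i for i = 1, …, k. -/

import Mathlib

/-!
Mixed-radix expansion: write `m < L₀ ⋯ L_{k-1}` as `m = q · (L₁ ⋯ L_{k-1}) + s` with `q < L₀` and
`s < L₁ ⋯ L_{k-1}`. The first part is the single product `q · L₁ ⋯ L_{k-1}` (absent if `q = 0`),
and by induction `s` is a sum of at most `k - 1` products in `L₁, …, L_{k-1}`, each padded with
the factor `l₀ = 1`. So at most `k ≤ 2^{k-1}` products suffice, and `m = L₀ ⋯ L_{k-1}` is itself one.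
-/

open Finset

def IsSumOfBoxProducts {k : ℕ} (L : Fin k → ℕ) (r m : ℕ) : Prop :=
  ∃ f : Fin r → Fin k → ℕ, (∀ j i, 1 ≤ f j i ∧ f j i ≤ L i) ∧ m = ∑ j, ∏ i, f j i

namespace IsSumOfBoxProducts

variable {k : ℕ}

theorem zero (L : Fin k → ℕ) : IsSumOfBoxProducts L 0 0 :=
  ⟨Fin.elim0, fun j => j.elim0, by simp⟩

theorem prod {L l : Fin k → ℕ} (hl : ∀ i, 1 ≤ l i ∧ l i ≤ L i) :
    IsSumOfBoxProducts L 1 (∏ i, l i) :=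
  ⟨fun _ => l, fun _ => hl, by simp⟩

theorem add {L : Fin k → ℕ} {r₁ r₂ m₁ m₂ : ℕ} (h₁ : IsSumOfBoxProducts L r₁ m₁)
    (h₂ : IsSumOfBoxProducts L r₂ m₂) : IsSumOfBoxProducts L (r₁ + r₂) (m₁ + m₂) := by
  obtain ⟨f₁, hf₁, rfl⟩ := h₁
  obtain ⟨f₂, hf₂, rfl⟩ := h₂
  refine ⟨Fin.append f₁ f₂, fun j => ?_, by simp [Fin.sum_univ_add]⟩
  refine Fin.addCases (fun j => ?_) (fun j => ?_) j <;> simp [hf₁, hf₂]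

theorem mul_cons {L : Fin (k + 1) → ℕ} {r m a : ℕ} (h : IsSumOfBoxProducts (Fin.tail L) r m)
    (ha₁ : 1 ≤ a) (ha : a ≤ L 0) : IsSumOfBoxProducts L r (a * m) := by
  obtain ⟨f, hf, rfl⟩ := h
  refine ⟨fun j => Fin.cons a (f j), fun j i => ?_, by simp [Fin.prod_cons, mul_sum]⟩
  induction i using Fin.cases with
  | zero => exact ⟨ha₁, ha⟩
  | succ i => exact hf j i

end IsSumOfBoxProducts

theorem exists_isSumOfBoxProducts_of_lt_prod {k : ℕ} {L : Fin k → ℕ} {m : ℕ}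
    (hm : m < ∏ i, L i) : ∃ r ≤ k, IsSumOfBoxProducts L r m := by
  induction k generalizing m with
  | zero =>
    obtain rfl : m = 0 := by simpa using hm
    exact ⟨0, le_rfl, .zero L⟩
  | succ k ih =>
    set P := ∏ i, Fin.tail L i
    have hP : ∏ i, L i = L 0 * P := Fin.prod_univ_succ L
    have hq : m / P < L 0 := Nat.div_lt_of_lt_mul (by rwa [hP, mul_comm] at hm)
    have hP₀ : P ≠ 0 := fun h => by simp [hP, h] at hm
    have hs : m % P < P := Nat.mod_lt _ (Nat.pos_of_ne_zero hP₀)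
    obtain ⟨r, hr, hrep⟩ := ih hs
    have hrest : IsSumOfBoxProducts L r (m % P) := by
      simpa using hrep.mul_cons le_rfl (Nat.one_le_of_lt hq)
    rcases Nat.eq_zero_or_pos (m / P) with hq₀ | hq₀
    · refine ⟨r, by omega, ?_⟩
      rwa [← Nat.mod_add_div m P, hq₀, mul_zero, add_zero]
    · have hlead : IsSumOfBoxProducts L 1 (m / P * P) := by
        rw [← Fin.prod_cons]
        refine .prod fun i => ?_
        induction i using Fin.cases with
        | zero => exact ⟨hq₀, hq.le⟩
        | succ i =>
          exact ⟨Nat.one_le_iff_ne_zero.2 (prod_ne_zero_iff.1 hP₀ i (mem_univ i)), le_rfl⟩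
      refine ⟨1 + r, by omega, ?_⟩
      rw [← Nat.div_add_mod' m P]
      exact hlead.add hrest

theorem stmt8_general (k : ℕ) (L : Fin k → ℕ)
    (m : ℕ) (hm : m ≤ ∏ i, L i) :
    ∃ (r : ℕ) (f : Fin r → Fin k → ℕ), r ≤ 2 ^ (k - 1) ∧
      (∀ j i, 1 ≤ f j i ∧ f j i ≤ L i) ∧ m = ∑ j, ∏ i, f j i := by
  suffices ∃ r ≤ 2 ^ (k - 1), IsSumOfBoxProducts L r m by
    obtain ⟨r, hr, f, hf, hsum⟩ := this
    exact ⟨r, f, hr, hf, hsum⟩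
  rcases hm.lt_or_eq with hlt | rfl
  · obtain ⟨r, hr, hrep⟩ := exists_isSumOfBoxProducts_of_lt_prod hlt
    have hk : k ≤ 2 ^ (k - 1) := by
      have := Nat.lt_two_pow_self (n := k - 1)
      omega
    exact ⟨r, hr.trans hk, hrep⟩
  · by_cases h : ∏ i, L i = 0
    · exact ⟨0, Nat.zero_le _, h ▸ .zero L⟩
    · refine ⟨1, Nat.one_le_two_pow, .prod fun i => ⟨?_, le_rfl⟩⟩
      exact Nat.one_le_iff_ne_zero.2 (prod_ne_zero_iff.1 h i (mem_univ i))

/-- Every nonnegative integer at most `L₁ ⋯ L_k` is the sum of at most `2^{k−1}` numbers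
of the form `l₁ ⋯ l_k` with `1 ≤ lᵢ ≤ Lᵢ` for each `i`. -/
theorem stmt8 (k : ℕ) (hk : 1 ≤ k) (L : Fin k → ℕ) (hL : ∀ i, 0 < L i)
    (m : ℕ) (hm : m ≤ ∏ i, L i) :
    ∃ (r : ℕ) (f : Fin r → Fin k → ℕ), r ≤ 2 ^ (k - 1) ∧
      (∀ j i, 1 ≤ f j i ∧ f j i ≤ L i) ∧ m = ∑ j, ∏ i, f j i :=
  stmt8_general k L m hm
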